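/- Data processing inequality for cycle mutual information: let p be a distribution on X, q : X → P(Y) a channel, and r : Y → P(Z) a channel. Then for every integer ℓ ≥ 2, I°_ℓ(diag(p)·q) ≥ I°_ℓ(diag(p)·q·r), where diag(p)·q is the joint distribution on X × Y with entries p(i)q(i,k). -/

import Mathlib

/-!
The Gram matrix `z zᵀ` of the entrywise square root of the joint distribution `diag(p)·q` has
entries `√(p i) √(p j) · BC(q i, q j)`, where `BC` is the Bhattacharyya coefficient. Pushing two
distributions through the same channel `r` can only increase their Bhattacharyya coefficient
(Cauchy–Schwarz in each output letter), so `z zᵀ ≤ w wᵀ` entrywise. For nonnegative matrices the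
entrywise order passes to powers and traces; the trace of `(z zᵀ)^ℓ` is positive because the
diagonal of `z zᵀ` is `p`, and since `1 / (1 - ℓ) < 0` taking logarithms reverses the inequality.
-/

open Matrix Finset

namespace Matrix

variable {n α : Type*} [Fintype n] [DecidableEq n] [Semiring α] [PartialOrder α]

theorem pow_apply_le_pow_apply [IsOrderedRing α] {A B : Matrix n n α}
    (hA : ∀ i j, 0 ≤ A i j) (hAB : ∀ i j, A i j ≤ B i j) (k : ℕ) (i j : n) :
    (A ^ k) i j ≤ (B ^ k) i j := by
  induction k generalizing j with
  | zero => rfl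
  | succ m ih =>
    rw [pow_succ, pow_succ, mul_apply, mul_apply]
    exact sum_le_sum fun l _ ↦ mul_le_mul (ih l) (hAB l j) (hA l j)
      ((pow_apply_nonneg hA m i l).trans (ih l))

theorem trace_pow_le_trace_pow [IsOrderedRing α] {A B : Matrix n n α}
    (hA : ∀ i j, 0 ≤ A i j) (hAB : ∀ i j, A i j ≤ B i j) (k : ℕ) :
    trace (A ^ k) ≤ trace (B ^ k) :=
  sum_le_sum fun i _ ↦ pow_apply_le_pow_apply hA hAB k i i

theorem apply_self_pow_le_pow_apply_self [IsOrderedRing α] {A : Matrix n n α}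
    (hA : ∀ i j, 0 ≤ A i j) (k : ℕ) (i : n) : A i i ^ k ≤ (A ^ k) i i := by
  induction k with
  | zero => simp
  | succ m ih =>
    rw [pow_succ, pow_succ, mul_apply]
    calc A i i ^ m * A i i ≤ (A ^ m) i i * A i i := mul_le_mul_of_nonneg_right ih (hA i i)
      _ ≤ ∑ l, (A ^ m) i l * A l i :=
        single_le_sum (f := fun l ↦ (A ^ m) i l * A l i)
          (fun l _ ↦ mul_nonneg (pow_apply_nonneg hA m i l) (hA l i)) (mem_univ i)

theorem trace_pow_pos [IsStrictOrderedRing α] {A : Matrix n n α}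
    (hA : ∀ i j, 0 ≤ A i j) {i : n} (hi : 0 < A i i) (k : ℕ) : 0 < trace (A ^ k) :=
  calc 0 < A i i ^ k := pow_pos hi k
    _ ≤ (A ^ k) i i := apply_self_pow_le_pow_apply_self hA k i
    _ ≤ trace (A ^ k) :=
      single_le_sum (f := fun j ↦ (A ^ k) j j)
        (fun j _ ↦ pow_apply_nonneg hA k j j) (mem_univ i)

end Matrix

section Bhattacharyya

variable {ι κ : Type*} [Fintype ι]

noncomputable def bhattacharyyaCoeff (a b : ι → ℝ) : ℝ := ∑ k, √(a k) * √(b k)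

theorem bhattacharyyaCoeff_nonneg (a b : ι → ℝ) : 0 ≤ bhattacharyyaCoeff a b :=
  sum_nonneg fun _ _ ↦ by positivity

theorem bhattacharyyaCoeff_self {a : ι → ℝ} (ha : ∀ k, 0 ≤ a k) :
    bhattacharyyaCoeff a a = ∑ k, a k :=
  sum_congr rfl fun k _ ↦ Real.mul_self_sqrt (ha k)

theorem bhattacharyyaCoeff_le_vecMul [Fintype κ] {a b : ι → ℝ} (ha : ∀ k, 0 ≤ a k)
    (hb : ∀ k, 0 ≤ b k) {r : Matrix ι κ ℝ} (hr : ∀ k l, 0 ≤ r k l)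
    (hr1 : ∀ k, ∑ l, r k l = 1) :
    bhattacharyyaCoeff a b ≤ bhattacharyyaCoeff (a ᵥ* r) (b ᵥ* r) := by
  have split : bhattacharyyaCoeff a b = ∑ l, ∑ k, √(a k * r k l) * √(b k * r k l) := by
    rw [bhattacharyyaCoeff, sum_comm]
    refine sum_congr rfl fun k _ ↦ ?_
    have hterm : ∀ l, √(a k * r k l) * √(b k * r k l) = √(a k) * √(b k) * r k l := fun l ↦ by
      rw [Real.sqrt_mul (ha k), Real.sqrt_mul (hb k), mul_mul_mul_comm,
        Real.mul_self_sqrt (hr k l)]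
    simp only [hterm, ← mul_sum, hr1 k, mul_one]
  rw [split]
  exact sum_le_sum fun l _ ↦ Real.sum_sqrt_mul_sqrt_le _
    (fun k ↦ mul_nonneg (ha k) (hr k l)) (fun k ↦ mul_nonneg (hb k) (hr k l))

end Bhattacharyya

theorem mul_transpose_apply_eq_bhattacharyyaCoeff {X Y : Type*} [Fintype Y]
    {p : X → ℝ} (hp : ∀ i, 0 ≤ p i) {q : Matrix X Y ℝ} {z : Matrix X Y ℝ}
    (hz : ∀ i k, z i k = √(p i * q i k)) (i j : X) :
    (z * zᵀ) i j = √(p i) * √(p j) * bhattacharyyaCoeff (q i) (q j) := by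
  rw [mul_apply, bhattacharyyaCoeff, mul_sum]
  refine sum_congr rfl fun k _ ↦ ?_
  rw [transpose_apply, hz, hz, Real.sqrt_mul (hp i), Real.sqrt_mul (hp j)]
  ring

/-- Data processing inequality for cycle mutual information: for a source distribution `p`
on `X`, a channel `q : X → P(Y)` and a further channel `r : Y → P(Z)`, and integer `ℓ ≥ 2`,
`I°_ℓ(diag(p)·q) ≥ I°_ℓ(diag(p)·q·r)`, where `diag(p)·q` is the joint distribution on
`X × Y` with entries `p i * q i k` and `diag(p)·q·r` has entries `p i * (∑ k, q i k * r k l)`. -/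
theorem cycleMutualInformation_data_processing
    {X Y Z : Type*} [Fintype X] [Fintype Y] [Fintype Z] [DecidableEq X]
    (p : X → ℝ) (hp : ∀ i, 0 ≤ p i) (hp1 : ∑ i, p i = 1)
    (q : Matrix X Y ℝ) (hq : ∀ i k, 0 ≤ q i k) (hq1 : ∀ i, ∑ k, q i k = 1)
    (r : Matrix Y Z ℝ) (hr : ∀ k l, 0 ≤ r k l) (hr1 : ∀ k, ∑ l, r k l = 1)
    (z : Matrix X Y ℝ) (hz : ∀ i k, z i k = Real.sqrt (p i * q i k))
    (w : Matrix X Z ℝ) (hw : ∀ i l, w i l = Real.sqrt (p i * (∑ k, q i k * r k l)))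
    (ℓ : ℕ) (hℓ : 2 ≤ ℓ) :
    (1 / (1 - (ℓ : ℝ))) * Real.log (Matrix.trace ((w * wᵀ) ^ ℓ))
      ≤ (1 / (1 - (ℓ : ℝ))) * Real.log (Matrix.trace ((z * zᵀ) ^ ℓ)) := by
  have hqr : ∀ i l, 0 ≤ (q i ᵥ* r) l := fun i l ↦ sum_nonneg fun k _ ↦ mul_nonneg (hq i k) (hr k l)
  have gram_z := mul_transpose_apply_eq_bhattacharyyaCoeff hp hz
  have gram_w := mul_transpose_apply_eq_bhattacharyyaCoeff (q := fun i ↦ q i ᵥ* r) hp hw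
  have hA : ∀ i j, 0 ≤ (z * zᵀ) i j := fun i j ↦ by
    rw [gram_z]
    exact mul_nonneg (by positivity) (bhattacharyyaCoeff_nonneg _ _)
  have hAB : ∀ i j, (z * zᵀ) i j ≤ (w * wᵀ) i j := fun i j ↦ by
    rw [gram_z, gram_w]
    exact mul_le_mul_of_nonneg_left (bhattacharyyaCoeff_le_vecMul (hq i) (hq j) hr hr1)
      (by positivity)
  obtain ⟨i, -, hi⟩ : ∃ i ∈ univ, (0 : ℝ) < p i :=
    exists_lt_of_sum_lt (by simp [hp1])
  have hdiag : (z * zᵀ) i i = p i := by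
    rw [gram_z, bhattacharyyaCoeff_self (hq i), hq1 i, Real.mul_self_sqrt (hp i), mul_one]
  have htr : 0 < trace ((z * zᵀ) ^ ℓ) := trace_pow_pos hA (hdiag ▸ hi) ℓ
  have hc : 1 / (1 - (ℓ : ℝ)) ≤ 0 := by
    have : (2 : ℝ) ≤ ℓ := by exact_mod_cast hℓ
    exact div_nonpos_of_nonneg_of_nonpos zero_le_one (by linarith)
  exact mul_le_mul_of_nonpos_left
    (Real.log_le_log htr (trace_pow_le_trace_pow hA hAB ℓ)) hc
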